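/- Let 𝔉 : Ω → ℝ be locally Lipschitz and x ∈ Ω, and assume 𝔉 is upper regular or lower regular at x. Then the condition '𝔉_ℓ'(x;h)·𝔉_r'(x;h) ≤ 0 for every h ∈ X' holds if and only if '𝔉_+^∘(x;h)·𝔉_−^∘(x;h) ≤ 0 for every h ∈ X'. In particular, if 0 ∈ ∂_C^−𝔉(x) ∪ ∂_C^+𝔉(x), then ∂^−𝔉(x) ∪ ∂^+𝔉(x) is nonempty. -/
import Mathlib


open Filter Topology Set Pointwise

variable {X : Type*} [NormedAddCommGroup X] [NormedSpace ℝ X]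

/-- Clarke's generalized upper directional derivative
`𝔉_+^∘(x;h) = limsup_{y→x, t↓0} (𝔉(y+th) − 𝔉(y))/t`. -/
noncomputable def clarkeUpper (F : X → ℝ) (x h : X) : ℝ :=
  Filter.limsup (fun p : X × ℝ => (F (p.1 + p.2 • h) - F p.1) / p.2)
    ((𝓝 x) ×ˢ (𝓝[>] (0:ℝ)))

/-- Clarke's generalized lower directional derivative
`𝔉_−^∘(x;h) = liminf_{y→x, t↓0} (𝔉(y+th) − 𝔉(y))/t`. -/
noncomputable def clarkeLower (F : X → ℝ) (x h : X) : ℝ :=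
  Filter.liminf (fun p : X × ℝ => (F (p.1 + p.2 • h) - F p.1) / p.2)
    ((𝓝 x) ×ˢ (𝓝[>] (0:ℝ)))

/-- Clarke subdifferential `∂_C^−𝔉(x) = {ζ ∈ X* : ⟨ζ,h⟩ ≤ 𝔉_+^∘(x;h) ∀h}`. -/
def clarkeSubdiff (F : X → ℝ) (x : X) : Set (X →L[ℝ] ℝ) :=
  {ζ | ∀ h : X, ζ h ≤ clarkeUpper F x h}

/-- Clarke superdifferential `∂_C^+𝔉(x) = {ζ ∈ X* : ⟨ζ,h⟩ ≥ 𝔉_−^∘(x;h) ∀h}`. -/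
def clarkeSuperdiff (F : X → ℝ) (x : X) : Set (X →L[ℝ] ℝ) :=
  {ζ | ∀ h : X, clarkeLower F x h ≤ ζ h}

lemma real_liminf_neg {α : Type*} (l : Filter α) (f : α → ℝ) :
    Filter.liminf (fun a => -f a) l = - Filter.limsup f l := by
  rw [Filter.liminf_eq, Filter.limsup_eq, Real.sInf_def, neg_neg]
  congr 1
  ext a
  simp only [Set.mem_neg, Set.mem_setOf_eq]
  exact eventually_congr (Eventually.of_forall fun x => by rw [le_neg])

lemma tendsto_shear (x h : X) :
    Tendsto (fun p : X × ℝ => (p.1 + p.2 • h, p.2))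
      ((𝓝 x) ×ˢ (𝓝[>] (0:ℝ))) ((𝓝 x) ×ˢ (𝓝[>] (0:ℝ))) := by
  apply Tendsto.prodMk _ tendsto_snd
  have h2 : Tendsto (fun p : X × ℝ => p.2 • h) ((𝓝 x) ×ˢ (𝓝[>] (0:ℝ))) (𝓝 ((0:ℝ) • h)) :=
    (tendsto_snd.mono_right nhdsWithin_le_nhds).smul_const h
  simpa using tendsto_fst.add h2

lemma map_shear (x h : X) :
    Filter.map (fun p : X × ℝ => (p.1 + p.2 • h, p.2)) ((𝓝 x) ×ˢ (𝓝[>] (0:ℝ)))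
      = (𝓝 x) ×ˢ (𝓝[>] (0:ℝ)) := by
  refine le_antisymm (tendsto_shear x h) ?_
  have H := Filter.map_mono (m := fun p : X × ℝ => (p.1 + p.2 • h, p.2)) (tendsto_shear x (-h))
  rw [Filter.map_map] at H
  have e : ((fun p : X × ℝ => (p.1 + p.2 • h, p.2)) ∘ fun p : X × ℝ => (p.1 + p.2 • (-h), p.2))
      = id := by
    funext p
    simp [Function.comp, smul_neg]
  rw [e, Filter.map_id] at H
  exact H

lemma clarkeLower_neg (F : X → ℝ) (x h : X) :
    clarkeLower F x h = - clarkeUpper F x (-h) := by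
  unfold clarkeLower clarkeUpper
  rw [← real_liminf_neg]
  conv_lhs => rw [← map_shear x (-h)]
  have e2 : ∀ p : X × ℝ, p.1 + p.2 • (-h) + p.2 • h = p.1 := by
    intro p; rw [smul_neg]; abel
  have e : ((fun p : X × ℝ => (F (p.1 + p.2 • h) - F p.1) / p.2) ∘
        fun p : X × ℝ => (p.1 + p.2 • (-h), p.2))
      = fun p : X × ℝ => -((F (p.1 + p.2 • (-h)) - F p.1) / p.2) := by
    funext p
    simp only [Function.comp, e2 p]
    ring
  rw [Filter.liminf, Filter.map_map, e, Filter.liminf]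

lemma Dl_eq_neg {F : X → ℝ} {x : X} {D Dl : X → ℝ}
    (hD : ∀ h : X, Tendsto (fun t : ℝ => (F (x + t • h) - F x) / t)
      (𝓝[>] (0:ℝ)) (𝓝 (D h)))
    (hDl : ∀ h : X, Tendsto (fun t : ℝ => (F (x + t • h) - F x) / t)
      (𝓝[<] (0:ℝ)) (𝓝 (Dl h))) (h : X) : Dl h = - D (-h) := by
  have hneg : Tendsto (fun t : ℝ => -t) (𝓝[>] (0:ℝ)) (𝓝[<] (0:ℝ)) := by
    apply tendsto_nhdsWithin_of_tendsto_nhds_of_eventually_within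
    · have hc : Tendsto (fun t : ℝ => -t) (𝓝 (0:ℝ)) (𝓝 (0:ℝ)) := by
        simpa using continuous_neg.tendsto (0:ℝ)
      exact hc.mono_left nhdsWithin_le_nhds
    · filter_upwards [self_mem_nhdsWithin] with t ht
      simpa using ht
  have h1 : Tendsto (fun t : ℝ => (F (x + (-t) • h) - F x) / (-t))
      (𝓝[>] (0:ℝ)) (𝓝 (Dl h)) := (hDl h).comp hneg
  have h2 : Tendsto (fun t : ℝ => (F (x + t • (-h)) - F x) / t)
      (𝓝[>] (0:ℝ)) (𝓝 (- Dl h)) := by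
    have := h1.neg
    refine this.congr fun t => ?_
    rw [neg_smul, smul_neg, div_neg, neg_neg]
  have : D (-h) = - Dl h := tendsto_nhds_unique (hD (-h)) h2
  rw [this, neg_neg]

/-- Let `𝔉 : Ω → ℝ` be locally Lipschitz, `x ∈ Ω`, with right directional derivatives `D h`
and left directional derivatives `Dl h` at `x` in every direction, and assume `𝔉` is
upper regular or lower regular at `x`.  Then `(∀ h, Dl h · D h ≤ 0)` holds iff
`(∀ h, 𝔉_+^∘(x;h)·𝔉_−^∘(x;h) ≤ 0)` holds.  In particular, if
`0 ∈ ∂_C^−𝔉(x) ∪ ∂_C^+𝔉(x)` then `∂^−𝔉(x) ∪ ∂^+𝔉(x)` is nonempty. -/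
theorem regular_criticality_equivalence
    [CompleteSpace X] {Ω : Set X} (hΩ : IsOpen Ω)
    (F : X → ℝ)
    (hlip : ∀ z ∈ Ω, ∃ K : NNReal, ∃ s ∈ 𝓝 z, LipschitzOnWith K F s)
    (x : X) (hx : x ∈ Ω)
    (D Dl : X → ℝ)
    (hD : ∀ h : X, Tendsto (fun t : ℝ => (F (x + t • h) - F x) / t)
      (𝓝[>] (0:ℝ)) (𝓝 (D h)))
    (hDl : ∀ h : X, Tendsto (fun t : ℝ => (F (x + t • h) - F x) / t)
      (𝓝[<] (0:ℝ)) (𝓝 (Dl h)))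
    (hreg : (∀ h : X, D h = clarkeUpper F x h) ∨ (∀ h : X, D h = clarkeLower F x h)) :
    ((∀ h : X, Dl h * D h ≤ 0) ↔
      (∀ h : X, clarkeUpper F x h * clarkeLower F x h ≤ 0)) ∧
    ((0 : X →L[ℝ] ℝ) ∈ clarkeSubdiff F x ∪ clarkeSuperdiff F x →
      ({ζ : X →L[ℝ] ℝ | ∀ h : X, ζ h ≤ D h} ∪
        {ζ : X →L[ℝ] ℝ | ∀ h : X, D h ≤ ζ h}).Nonempty) := by
  have hDl' : ∀ h : X, Dl h = - D (-h) := Dl_eq_neg hD hDl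
  have hCL : ∀ h : X, clarkeLower F x h = - clarkeUpper F x (-h) := clarkeLower_neg F x
  have hCU : ∀ h : X, clarkeUpper F x h = - clarkeLower F x (-h) := by
    intro h
    rw [hCL (-h), neg_neg, neg_neg]
  rcases hreg with hU | hL
  · have hlow : ∀ h : X, clarkeLower F x h = Dl h := by
      intro h; rw [hCL, ← hU, hDl']
    constructor
    · constructor
      · intro H h
        rw [← hU, hlow]
        nlinarith [H h]
      · intro H h
        have := H h
        rw [← hU, hlow] at this
        nlinarith
    · rintro (h0 | h0)
      · refine ⟨0, Or.inl fun h => ?_⟩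
        have := h0 h
        simp only [ContinuousLinearMap.zero_apply] at this ⊢
        rw [hU]; exact this
      · refine ⟨0, Or.inl fun h => ?_⟩
        have := h0 (-h)
        rw [hlow, hDl' (-h), neg_neg] at this
        simp only [ContinuousLinearMap.zero_apply] at this ⊢
        linarith
  · have hup : ∀ h : X, clarkeUpper F x h = Dl h := by
      intro h; rw [hCU, ← hL, hDl']
    constructor
    · constructor
      · intro H h
        rw [← hL, hup]
        exact H h
      · intro H h
        have := H h
        rw [← hL, hup] at this
        exact this
    · rintro (h0 | h0)
      · refine ⟨0, Or.inr fun h => ?_⟩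
        have := h0 (-h)
        rw [hup, hDl' (-h), neg_neg] at this
        simp only [ContinuousLinearMap.zero_apply] at this ⊢
        linarith
      · refine ⟨0, Or.inr fun h => ?_⟩
        have := h0 h
        rw [← hL] at this
        simp only [ContinuousLinearMap.zero_apply]
        exact this
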